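/- Let G and H be graphs and D a dominating set of G □ H. If there exists a dominating set S of G such that for every h ∈ V(H), S is a minimal dominating set of G containing the projection p_G(D ∩ G_h), then |D| ≥ γ(G)·γ(H). -/

import Mathlib

open SimpleGraph

/-- `D` is a dominating set of `G`: every vertex is in `D` or adjacent to a vertex of `D`. -/
def IsDomSet {V : Type*} (G : SimpleGraph V) (D : Set V) : Prop :=
  ∀ v : V, v ∈ D ∨ ∃ u ∈ D, G.Adj u v

/-- The domination number `γ(G)`: minimum size of a dominating set. -/
noncomputable def domNum {V : Type*} (G : SimpleGraph V) : ℕ :=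
  sInf {n : ℕ | ∃ D : Set V, IsDomSet G D ∧ D.ncard = n}

/-- `S` is a minimal dominating set of `G` containing `X`. -/
def IsMinDomContaining {V : Type*} (G : SimpleGraph V) (X S : Set V) : Prop :=
  IsDomSet G S ∧ X ⊆ S ∧ ∀ S' : Set V, X ⊆ S' → S' ⊂ S → ¬ IsDomSet G S'

/-- `y` is a private neighbor of `x` with respect to `S`: `y ∉ S` and `N(y) ∩ S = {x}`. -/
def IsPrivNbr {V : Type*} (G : SimpleGraph V) (S : Set V) (x y : V) : Prop :=
  y ∉ S ∧ G.neighborSet y ∩ S = {x}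

/-- Projection to `G` of the part of `D` in the `G`-layer at `h`. -/
def projLayer {V W : Type*} (D : Set (V × W)) (h : W) : Set V :=
  Prod.fst '' (D ∩ {p : V × W | p.2 = h})

lemma domNum_le_ncard {V : Type*} (G : SimpleGraph V) {S : Set V} (h : IsDomSet G S) :
    domNum G ≤ S.ncard := Nat.sInf_le ⟨S, h, rfl⟩

theorem single_minimal_layer_bound {V W : Type*} [Fintype V] [Fintype W]
    (G : SimpleGraph V) (H : SimpleGraph W) (D : Set (V × W))
    (hD : IsDomSet (G □ H) D)
    (S : Set V) (hS : IsDomSet G S)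
    (hmin : ∀ h : W, IsMinDomContaining G (projLayer D h) S) :
    D.ncard ≥ domNum G * domNum H := by
  classical
  set F : V → Set W := fun s => {h | (s, h) ∈ D} with hF
  have hDS : ∀ p ∈ D, p.1 ∈ S := by
    intro p hp
    exact (hmin p.2).2.1 ⟨p, ⟨hp, rfl⟩, rfl⟩
  -- key: each fiber F s (s ∈ S) dominates H
  have key : ∀ s ∈ S, IsDomSet H (F s) := by
    intro s hsS
    by_cases hall : ∀ h : W, (s, h) ∈ D
    · intro h; exact Or.inl (hall h)
    · push_neg at hall
      obtain ⟨h₀, hh₀⟩ := hall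
      have hsP : s ∉ projLayer D h₀ := by
        rintro ⟨p, ⟨hpD, hp2⟩, hp1⟩
        apply hh₀
        have hps : p = (s, h₀) := Prod.ext hp1 hp2
        rwa [hps] at hpD
      have hsub : projLayer D h₀ ⊆ S \ {s} := by
        intro x hx
        refine ⟨(hmin h₀).2.1 hx, ?_⟩
        intro hxs
        simp only [Set.mem_singleton_iff] at hxs
        subst hxs
        exact hsP hx
      have hss : S \ {s} ⊂ S := by
        constructor
        · exact Set.diff_subset
        · intro hsub'
          exact ((hsub' hsS).2 rfl)
      have hnd : ¬ IsDomSet G (S \ {s}) := (hmin h₀).2.2 _ hsub hss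
      unfold IsDomSet at hnd
      push_neg at hnd
      obtain ⟨y, hy1, hy2⟩ := hnd
      by_cases hyS : y ∈ S
      · -- y = s, and s has no neighbor in S
        have hys : y = s := by
          by_contra hne
          exact hy1 ⟨hyS, hne⟩
        subst hys
        have hNs : ∀ u ∈ S, ¬ G.Adj u y := by
          intro u hu hadj
          by_cases hus : u = y
          · subst hus; exact G.irrefl hadj
          · exact hy2 u ⟨hu, hus⟩ hadj
        intro h
        rcases hD (y, h) with hmem | ⟨⟨u, h'⟩, huD, hadj⟩
        · exact Or.inl hmem
        · rcases (SimpleGraph.boxProd_adj).mp hadj with ⟨hadjG, heq⟩ | ⟨hadjH, heq⟩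
          · exact absurd hadjG (hNs u (hDS _ huD))
          · refine Or.inr ⟨h', ?_, hadjH⟩
            simp only [hF, Set.mem_setOf_eq]
            have huy : u = y := heq
            rwa [huy] at huD
      · -- y ∉ S : y is a private neighbor of s
        have hadjsy : G.Adj s y := by
          rcases hS y with h1 | ⟨u, hu, hadj⟩
          · exact absurd h1 hyS
          · by_cases hus : u = s
            · rwa [hus] at hadj
            · exact absurd hadj (hy2 u ⟨hu, hus⟩)
        intro h
        rcases hD (y, h) with hmem | ⟨⟨u, h'⟩, huD, hadj⟩
        · exact absurd (hDS _ hmem) hyS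
        · rcases (SimpleGraph.boxProd_adj).mp hadj with ⟨hadjG, heq⟩ | ⟨hadjH, heq⟩
          · have huS : u ∈ S := hDS _ huD
            have hus : u = s := by
              by_contra hne
              exact hy2 u ⟨huS, hne⟩ hadjG
            left
            simp only [hF, Set.mem_setOf_eq]
            have heq2 : (u, h') = (s, h) := Prod.ext hus heq
            rwa [heq2] at huD
          · exact absurd (hDS _ huD) (heq ▸ hyS)
  -- counting
  have hγH : ∀ s ∈ S, domNum H ≤ (F s).ncard := fun s hs => Nat.sInf_le ⟨F s, key s hs, rfl⟩
  have hγG : domNum G ≤ S.ncard := Nat.sInf_le ⟨S, hS, rfl⟩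
  have hDeq : D.toFinset = S.toFinset.biUnion
      (fun s => (F s).toFinset.image (fun h => (s, h))) := by
    ext p
    simp only [Set.mem_toFinset, Finset.mem_biUnion, Finset.mem_image]
    constructor
    · intro hp
      exact ⟨p.1, hDS p hp, p.2, hp, rfl⟩
    · rintro ⟨s, hs, h, hh, rfl⟩
      exact hh
  have hinj : ∀ s : V, Function.Injective (fun h : W => (s, h)) := by
    intro s a b hab
    simpa using hab
  have hcard : D.toFinset.card = ∑ s ∈ S.toFinset, (F s).toFinset.card := by
    rw [hDeq, Finset.card_biUnion]
    · exact Finset.sum_congr rfl fun s _ => Finset.card_image_of_injective _ (hinj s)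
    · intro a _ b _ hab
      rw [Function.onFun, Finset.disjoint_left]
      rintro ⟨x, y⟩ hx hy
      simp only [Finset.mem_image] at hx hy
      obtain ⟨_, _, h1⟩ := hx
      obtain ⟨_, _, h2⟩ := hy
      injection h1 with h1a _
      injection h2 with h2a _
      exact hab (h1a.trans h2a.symm)
  have hsum : ∑ s ∈ S.toFinset, (F s).toFinset.card ≥ S.toFinset.card * domNum H := by
    calc ∑ s ∈ S.toFinset, (F s).toFinset.card
        ≥ ∑ _s ∈ S.toFinset, domNum H := by
          apply Finset.sum_le_sum
          intro s hs
          rw [← Set.ncard_eq_toFinset_card']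
          exact hγH s (Set.mem_toFinset.mp hs)
      _ = S.toFinset.card * domNum H := by rw [Finset.sum_const, smul_eq_mul]
  have hfin : D.ncard = D.toFinset.card := Set.ncard_eq_toFinset_card' D
  rw [hfin, hcard]
  refine le_trans ?_ hsum
  apply Nat.mul_le_mul_right
  rw [← Set.ncard_eq_toFinset_card']
  exact hγG
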